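/- (Theorem 3.3, case 0 < γ < 1: unconditional stability of the one-dimensional implicit scheme.) Let γ ∈ (0,1), α ∈ (1,2], integers N ≥ 2 and N_t ≥ 1, reals τ > 0 and Δx > 0, and nonnegative reals c_{i,k} (1 ≤ i ≤ N-1, 1 ≤ k ≤ N_t). Set ω_{i,k} = -Γ(2-γ)·τ^γ·κ_α·c_{i,k}/(Γ(4-α)·(Δx)^α), so ω_{i,k} ≥ 0. Suppose real numbers ε^k_i (0 ≤ i ≤ N, 0 ≤ k ≤ N_t) satisfy ε^k_0 = ε^k_N = 0 for all 1 ≤ k ≤ N_t and, for all 1 ≤ i ≤ N-1 and 0 ≤ k ≤ N_t - 1, (1 - ω_{i,k+1}·g^{α,N}_{i,i})·ε^{k+1}_i - ω_{i,k+1}·Σ_{m=0, m≠i}^{N} g^{α,N}_{i,m}·ε^{k+1}_m = Σ_{s=0}^{k-1}(l_s - l_{s+1})·ε^{k-s}_i + l_k·ε^0_i. Then for every 0 ≤ k ≤ N_t: max_{0≤i≤N} |ε^k_i| ≤ max_{0≤i≤N} |ε^0_i|. -/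

import Mathlib

/-! Write `β = 3 - α ∈ [1, 2)`. Between interior nodes, `g^{α,N}_{i,m}` depends only on the gap
`|i - m|`: the diagonal entry is `2·2^β - 8 < 0`, the off-diagonal ones are nonnegative (for
gaps `≥ 2` they are fourth differences of `x ^ β`), and on each side of the diagonal they
telescope to at most `4 - 2^β`, because the second difference of `x ^ β` decreases on `[1, ∞)`.
Since `ε` vanishes on the boundary, the scheme row at a node where `|ε^{k+1}|` is maximal
therefore bounds that maximum by the right-hand side, which is a convex combination of
`ε^0_i, …, ε^k_i` (`l_0 = 1` and `l_s` decreases, by concavity of `x ^ (1 - γ)`). Induction on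
`k` concludes. -/

/-- The coefficients `a^ν_{j,m}` of the second-order discretization of the left
Riemann–Liouville fractional derivative. All powers are real powers. -/
noncomputable def aCoef (ν : ℝ) (j m : ℕ) : ℝ :=
  if m = j then 1
  else if m = 0 then ((j : ℝ) - 1) ^ (3 - ν) - (j : ℝ) ^ (2 - ν) * ((j : ℝ) - 3 + ν)
  else ((j : ℝ) - (m : ℝ) + 1) ^ (3 - ν) - 2 * ((j : ℝ) - (m : ℝ)) ^ (3 - ν)
    + ((j : ℝ) - (m : ℝ) - 1) ^ (3 - ν)

/-- The coefficients `b^ν_{j,m}` of the second-order discretization of the right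
Riemann–Liouville fractional derivative on a grid with `N` subintervals. -/
noncomputable def bCoef (ν : ℝ) (N j m : ℕ) : ℝ :=
  if m = j then 1
  else if m = N then (3 - ν - (N : ℝ) + (j : ℝ)) * ((N : ℝ) - (j : ℝ)) ^ (2 - ν)
    + ((N : ℝ) - (j : ℝ) - 1) ^ (3 - ν)
  else ((m : ℝ) - (j : ℝ) + 1) ^ (3 - ν) - 2 * ((m : ℝ) - (j : ℝ)) ^ (3 - ν)
    + ((m : ℝ) - (j : ℝ) - 1) ^ (3 - ν)

/-- The coefficients `p^ν_{i,m}` (left-derivative part), for `1 ≤ i ≤ N-1`. -/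
noncomputable def pCoef (ν : ℝ) (i m : ℕ) : ℝ :=
  if m < i then aCoef ν (i - 1) m - 2 * aCoef ν i m + aCoef ν (i + 1) m
  else if m = i then -2 * aCoef ν i i + aCoef ν (i + 1) i
  else if m = i + 1 then aCoef ν (i + 1) (i + 1)
  else 0

/-- The coefficients `q^ν_{i,m}` (right-derivative part), for `1 ≤ i ≤ N-1`. -/
noncomputable def qCoef (ν : ℝ) (N i m : ℕ) : ℝ :=
  if m + 1 < i then 0
  else if m + 1 = i then bCoef ν N (i - 1) (i - 1)
  else if m = i then -2 * bCoef ν N i i + bCoef ν N (i - 1) i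
  else bCoef ν N (i - 1) m - 2 * bCoef ν N i m + bCoef ν N (i + 1) m

/-- The Riesz-derivative difference coefficients `g^{ν,N}_{i,m} = p^ν_{i,m} + q^ν_{i,m}`. -/
noncomputable def gCoef (ν : ℝ) (N i m : ℕ) : ℝ := pCoef ν i m + qCoef ν N i m

/-- The L1 coefficients `l_s = (s+1)^(1-γ) - s^(1-γ)` of the Caputo discretization. -/
noncomputable def lCoef (γ : ℝ) (s : ℕ) : ℝ := ((s : ℝ) + 1) ^ (1 - γ) - (s : ℝ) ^ (1 - γ)

/-- The Riesz constant `κ_ν = 1 / (2 cos(νπ/2))`. -/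
noncomputable def kappa (ν : ℝ) : ℝ := 1 / (2 * Real.cos (ν * Real.pi / 2))

/-- The maximum of `|v i|` over `0 ≤ i ≤ N`. -/
noncomputable def maxAbs (N : ℕ) (v : ℕ → ℝ) : ℝ :=
  (Finset.range (N + 1)).sup' Finset.nonempty_range_add_one fun i => |v i|

/-- The maximum of `|v i j|` over `0 ≤ i ≤ Nx`, `0 ≤ j ≤ Ny`. -/
noncomputable def maxAbs2 (Nx Ny : ℕ) (v : ℕ → ℕ → ℝ) : ℝ :=
  ((Finset.range (Nx + 1)) ×ˢ (Finset.range (Ny + 1))).sup'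
    (Finset.nonempty_range_add_one.product Finset.nonempty_range_add_one) fun p => |v p.1 p.2|

open Real Finset

lemma ConvexOn.two_mul_le_add {s : Set ℝ} {f : ℝ → ℝ} (hf : ConvexOn ℝ s f) {x h : ℝ}
    (hl : x - h ∈ s) (hr : x + h ∈ s) : 2 * f x ≤ f (x - h) + f (x + h) := by
  have := hf.2 hl hr (by norm_num : (0 : ℝ) ≤ 1 / 2) (by norm_num : (0 : ℝ) ≤ 1 / 2)
    (by norm_num)
  rw [smul_eq_mul, smul_eq_mul, smul_eq_mul, smul_eq_mul,
    show 1 / 2 * (x - h) + 1 / 2 * (x + h) = x by ring] at this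
  linarith

lemma ConcaveOn.add_le_two_mul {s : Set ℝ} {f : ℝ → ℝ} (hf : ConcaveOn ℝ s f) {x h : ℝ}
    (hl : x - h ∈ s) (hr : x + h ∈ s) : f (x - h) + f (x + h) ≤ 2 * f x := by
  have := hf.neg.two_mul_le_add hl hr
  simp only [Pi.neg_apply] at this
  linarith

lemma convexOn_rpow_of_nonpos {p : ℝ} (hp : p ≤ 0) :
    ConvexOn ℝ (Set.Ioi 0) fun x : ℝ ↦ x ^ p := by
  refine convexOn_of_hasDerivWithinAt2_nonneg (f' := fun x ↦ p * x ^ (p - 1))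
    (f'' := fun x ↦ p * ((p - 1) * x ^ (p - 1 - 1))) (convex_Ioi 0)
    (fun x hx ↦ (continuousAt_rpow_const x p (Or.inl (ne_of_gt hx))).continuousWithinAt)
    ?_ ?_ ?_ <;> rw [interior_Ioi] <;> intro x hx
  · exact (hasDerivAt_rpow_const (Or.inl (ne_of_gt hx))).hasDerivWithinAt
  · exact ((hasDerivAt_rpow_const (Or.inl (ne_of_gt hx))).const_mul p).hasDerivWithinAt
  · rw [← mul_assoc]
    exact mul_nonneg (by nlinarith) (rpow_nonneg (le_of_lt hx) _)

noncomputable def rpowSecondDiff (p x : ℝ) : ℝ := (x + 1) ^ p - 2 * x ^ p + (x - 1) ^ p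

lemma rpowSecondDiff_one {p : ℝ} (hp : p ≠ 0) : rpowSecondDiff p 1 = 2 ^ p - 2 := by
  norm_num [rpowSecondDiff, zero_rpow hp]

lemma rpowSecondDiff_two (p : ℝ) : rpowSecondDiff p 2 = 3 ^ p - 2 * 2 ^ p + 1 := by
  rw [rpowSecondDiff]
  norm_num

lemma rpowSecondDiff_nonneg {p x : ℝ} (hp : p ≤ 0) (hx : 1 < x) : 0 ≤ rpowSecondDiff p x := by
  have := (convexOn_rpow_of_nonpos hp).two_mul_le_add (x := x) (h := 1)
    (by simp only [Set.mem_Ioi]; linarith) (by simp only [Set.mem_Ioi]; linarith)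
  simp only [rpowSecondDiff]
  linarith

lemma rpowSecondDiff_nonpos {p x : ℝ} (hp₀ : 0 ≤ p) (hp₁ : p ≤ 1) (hx : 1 ≤ x) :
    rpowSecondDiff p x ≤ 0 := by
  have := (concaveOn_rpow hp₀ hp₁).add_le_two_mul (x := x) (h := 1)
    (by simp only [Set.mem_Ici]; linarith) (by simp only [Set.mem_Ici]; linarith)
  simp only [rpowSecondDiff]
  linarith

lemma continuous_rpowSecondDiff {p : ℝ} (hp : 0 ≤ p) : Continuous (rpowSecondDiff p) := by
  have h := continuous_rpow_const hp
  exact ((h.comp (continuous_id.add continuous_const)).sub (continuous_const.mul h)).add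
    (h.comp (continuous_id.sub continuous_const))

lemma hasDerivAt_rpowSecondDiff (p : ℝ) {x : ℝ} (hx : 1 < x) :
    HasDerivAt (rpowSecondDiff p) (p * rpowSecondDiff (p - 1) x) x := by
  have h₁ := ((hasDerivAt_id x).add_const 1).rpow_const (p := p) (Or.inl (by simp; linarith))
  have h₂ := hasDerivAt_rpow_const (p := p) (Or.inl (by linarith : x ≠ 0))
  have h₃ := ((hasDerivAt_id x).sub_const 1).rpow_const (p := p) (Or.inl (by simp; linarith))
  refine ((h₁.sub (h₂.const_mul 2)).add h₃).congr_deriv ?_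
  simp only [rpowSecondDiff, id]
  ring

lemma antitoneOn_rpowSecondDiff {β : ℝ} (hβ₁ : 1 ≤ β) (hβ₂ : β ≤ 2) :
    AntitoneOn (rpowSecondDiff β) (Set.Ici 1) := by
  refine antitoneOn_of_hasDerivWithinAt_nonpos (convex_Ici 1)
    (continuous_rpowSecondDiff (by linarith)).continuousOn
    (fun x hx ↦ (hasDerivAt_rpowSecondDiff β (by simpa using hx)).hasDerivWithinAt) ?_
  intro x hx
  rw [interior_Ici] at hx
  exact mul_nonpos_of_nonneg_of_nonpos (by linarith)
    (rpowSecondDiff_nonpos (by linarith) (by linarith) (le_of_lt hx))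

lemma convexOn_rpowSecondDiff {β : ℝ} (hβ₁ : 1 ≤ β) (hβ₂ : β ≤ 2) :
    ConvexOn ℝ (Set.Ici 1) (rpowSecondDiff β) := by
  refine convexOn_of_hasDerivWithinAt2_nonneg (f' := fun x ↦ β * rpowSecondDiff (β - 1) x)
    (f'' := fun x ↦ β * ((β - 1) * rpowSecondDiff (β - 1 - 1) x)) (convex_Ici 1)
    (continuous_rpowSecondDiff (by linarith)).continuousOn ?_ ?_ ?_ <;>
    rw [interior_Ici] <;> intro x hx
  · exact (hasDerivAt_rpowSecondDiff β hx).hasDerivWithinAt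
  · exact ((hasDerivAt_rpowSecondDiff (β - 1) hx).const_mul β).hasDerivWithinAt
  · exact mul_nonneg (by linarith) (mul_nonneg (by linarith)
      (rpowSecondDiff_nonneg (by linarith) hx))

lemma four_mul_two_rpow_le {β : ℝ} (hβ₁ : 1 ≤ β) (hβ₂ : β ≤ 2) :
    4 * 2 ^ β ≤ (3 : ℝ) ^ β + 7 := by
  set f : ℝ → ℝ := fun y ↦ 3 ^ y - 4 * 2 ^ y
  have hf : ∀ y, HasDerivAt f (3 ^ y * log 3 - 4 * (2 ^ y * log 2)) y := fun y ↦
    (hasStrictDerivAt_const_rpow (by norm_num) y).hasDerivAt.sub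
      ((hasStrictDerivAt_const_rpow (by norm_num) y).hasDerivAt.const_mul 4)
  -- `f' y = 2 ^ y ((3/2) ^ y log 3 - 4 log 2) ≤ 2 ^ y (9/4 log 3 - 4 log 2) ≤ 0`,
  -- as `3 ^ 9 ≤ 2 ^ 16`
  have hf' : ∀ y ∈ interior (Set.Icc (1 : ℝ) 2),
      3 ^ y * log 3 - 4 * (2 ^ y * log 2) ≤ 0 := by
    intro y hy
    rw [interior_Icc] at hy
    have h32 : (3 / 2 : ℝ) ^ y ≤ 9 / 4 := by
      calc (3 / 2 : ℝ) ^ y ≤ (3 / 2) ^ (2 : ℝ) :=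
            rpow_le_rpow_of_exponent_le (by norm_num) hy.2.le
        _ = 9 / 4 := by norm_num
    have hlog : 9 * log 3 ≤ 16 * log 2 := by
      have := log_le_log (by norm_num) (by norm_num : (3 : ℝ) ^ 9 ≤ 2 ^ 16)
      rwa [log_pow, log_pow] at this
    have h3 : (3 : ℝ) ^ y = 2 ^ y * (3 / 2) ^ y := by
      rw [← mul_rpow (by norm_num) (by norm_num)]; norm_num
    have h2 : (0 : ℝ) < 2 ^ y := rpow_pos_of_pos (by norm_num) y
    have hlog3 : 0 ≤ log 3 := log_nonneg (by norm_num)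
    rw [h3, mul_assoc, ← mul_assoc 4, mul_comm 4, mul_assoc, ← mul_sub]
    exact mul_nonpos_of_nonneg_of_nonpos h2.le (by nlinarith)
  have hanti : AntitoneOn f (Set.Icc 1 2) :=
    antitoneOn_of_hasDerivWithinAt_nonpos (convex_Icc 1 2)
      (fun y _ ↦ (hf y).continuousAt.continuousWithinAt) (fun y _ ↦ (hf y).hasDerivWithinAt) hf'
  have := hanti ⟨hβ₁, hβ₂⟩ ⟨by norm_num, le_rfl⟩ hβ₂
  norm_num [f] at this
  linarith

/-- `rieszStencil (3 - α) |i - m| = g^{α,N}_{i,m}` for interior nodes `0 < i, m < N`. -/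
noncomputable def rieszStencil (β : ℝ) : ℕ → ℝ
  | 0 => 2 * rpowSecondDiff β 1 - 4
  | 1 => rpowSecondDiff β 2 - 2 * rpowSecondDiff β 1 + 2
  | d + 2 => rpowSecondDiff β (d + 3) - 2 * rpowSecondDiff β (d + 2) + rpowSecondDiff β (d + 1)

lemma rieszStencil_nonneg {β : ℝ} (hβ₁ : 1 ≤ β) (hβ₂ : β ≤ 2) :
    ∀ {d : ℕ}, 1 ≤ d → 0 ≤ rieszStencil β d
  | 1, _ => by
    have := four_mul_two_rpow_le hβ₁ hβ₂
    rw [rieszStencil, rpowSecondDiff_two, rpowSecondDiff_one (by linarith)]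
    linarith
  | d + 2, _ => by
    have := (convexOn_rpowSecondDiff hβ₁ hβ₂).two_mul_le_add (x := d + 2) (h := 1)
      (by simp only [Set.mem_Ici]; linarith [d.cast_nonneg (α := ℝ)])
      (by simp only [Set.mem_Ici]; linarith [d.cast_nonneg (α := ℝ)])
    rw [rieszStencil]
    ring_nf at this ⊢
    linarith

lemma sum_range_rieszStencil (β : ℝ) (K : ℕ) :
    ∑ d ∈ range (K + 1), rieszStencil β (d + 1)
      = 2 - rpowSecondDiff β 1 + (rpowSecondDiff β (K + 2) - rpowSecondDiff β (K + 1)) := by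
  induction K with
  | zero => norm_num [rieszStencil]; ring
  | succ K ih =>
    rw [sum_range_succ, ih, rieszStencil]
    push_cast
    ring_nf

lemma sum_range_rieszStencil_le {β : ℝ} (hβ₁ : 1 ≤ β) (hβ₂ : β ≤ 2) (K : ℕ) :
    ∑ d ∈ range K, rieszStencil β (d + 1) ≤ -rieszStencil β 0 / 2 := by
  have hanti : ∀ x : ℝ, 1 ≤ x → rpowSecondDiff β (x + 1) ≤ rpowSecondDiff β x := fun x hx ↦
    antitoneOn_rpowSecondDiff hβ₁ hβ₂ (Set.mem_Ici.2 hx) (Set.mem_Ici.2 (by linarith))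
      (by linarith)
  rcases K with _ | K
  · have h₁ := rieszStencil_nonneg hβ₁ hβ₂ le_rfl
    have h₂ := hanti 1 le_rfl
    rw [rieszStencil] at h₁
    norm_num [rieszStencil] at h₂ ⊢
    linarith
  · have := hanti (K + 1) (by linarith [K.cast_nonneg (α := ℝ)])
    rw [sum_range_rieszStencil, rieszStencil]
    ring_nf at this ⊢
    linarith

section Coefficients

variable {ν : ℝ} {N i j m : ℕ}

lemma aCoef_self (ν : ℝ) (j : ℕ) : aCoef ν j j = 1 := if_pos rfl

lemma aCoef_of_pos_of_lt (hm : 0 < m) (hmj : m < j) :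
    aCoef ν j m = rpowSecondDiff (3 - ν) (j - m) := by
  rw [aCoef, if_neg hmj.ne, if_neg hm.ne', rpowSecondDiff]

lemma bCoef_self (ν : ℝ) (N j : ℕ) : bCoef ν N j j = 1 := if_pos rfl

lemma bCoef_of_lt_of_lt (hjm : j < m) (hmN : m < N) :
    bCoef ν N j m = rpowSecondDiff (3 - ν) (m - j) := by
  rw [bCoef, if_neg hjm.ne', if_neg hmN.ne, rpowSecondDiff]

lemma gCoef_self (hi : 0 < i) (hiN : i < N) : gCoef ν N i i = rieszStencil (3 - ν) 0 := by
  rw [gCoef, pCoef, qCoef, if_neg (lt_irrefl i), if_pos rfl, if_neg (by omega), if_neg (by omega),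
    if_pos rfl, aCoef_self, aCoef_of_pos_of_lt hi (by omega), bCoef_self,
    bCoef_of_lt_of_lt (by omega) hiN, rieszStencil]
  push_cast [Nat.cast_sub hi]
  ring_nf

lemma gCoef_of_lt (hm : 0 < m) (hmi : m < i) (hiN : i < N) :
    gCoef ν N i m = rieszStencil (3 - ν) (i - m) := by
  obtain ⟨d, rfl⟩ : ∃ d, i = m + 1 + d := ⟨i - (m + 1), by omega⟩
  rcases d with _ | d
  · rw [gCoef, pCoef, qCoef, if_pos hmi, if_neg (by omega), if_pos rfl,
      show m + 1 + 0 - 1 = m by omega,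
      aCoef_self, aCoef_of_pos_of_lt hm (by omega), aCoef_of_pos_of_lt hm (by omega), bCoef_self,
      show m + 1 + 0 - m = 1 by omega, rieszStencil]
    push_cast
    ring_nf
  · rw [gCoef, pCoef, qCoef, if_pos hmi, if_pos (by omega),
      show m + 1 + (d + 1) - 1 = m + d + 1 by omega,
      aCoef_of_pos_of_lt hm (by omega), aCoef_of_pos_of_lt hm (by omega),
      aCoef_of_pos_of_lt hm (by omega), show m + 1 + (d + 1) - m = d + 2 by omega, rieszStencil]
    push_cast
    ring_nf

lemma gCoef_of_gt (hi : 0 < i) (him : i < m) (hmN : m < N) :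
    gCoef ν N i m = rieszStencil (3 - ν) (m - i) := by
  obtain ⟨d, rfl⟩ : ∃ d, m = i + 1 + d := ⟨m - (i + 1), by omega⟩
  rcases d with _ | d
  · rw [gCoef, pCoef, qCoef, if_neg (by omega), if_neg (by omega), if_pos rfl, if_neg (by omega),
      if_neg (by omega), if_neg (by omega), aCoef_self, bCoef_of_lt_of_lt (by omega) hmN,
      bCoef_of_lt_of_lt (by omega) hmN, bCoef_self, show i + 1 + 0 - i = 1 by omega, rieszStencil]
    push_cast [Nat.cast_sub hi]
    ring_nf
  · rw [gCoef, pCoef, qCoef, if_neg (by omega), if_neg (by omega), if_neg (by omega),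
      if_neg (by omega), if_neg (by omega), if_neg (by omega), zero_add,
      bCoef_of_lt_of_lt (by omega) hmN, bCoef_of_lt_of_lt (by omega) hmN,
      bCoef_of_lt_of_lt (by omega) hmN, show i + 1 + (d + 1) - i = d + 2 by omega, rieszStencil]
    push_cast [Nat.cast_sub hi]
    ring_nf

end Coefficients

lemma sum_gCoef_interior_le {α : ℝ} (hα₁ : 1 ≤ α) (hα₂ : α ≤ 2) {N i : ℕ} (hi : 0 < i)
    (hiN : i < N) : ∑ m ∈ (Ioo 0 N).erase i, gCoef α N i m ≤ -gCoef α N i i := by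
  have hsplit : (Ioo 0 N).erase i = Ico 1 i ∪ Ico (i + 1) N := by
    ext m
    simp only [mem_erase, mem_Ioo, mem_union, mem_Ico]
    omega
  have hdisj : Disjoint (Ico 1 i) (Ico (i + 1) N) :=
    disjoint_left.2 fun m hm hm' ↦ by simp only [mem_Ico] at hm hm'; omega
  have hleft : ∑ m ∈ Ico 1 i, gCoef α N i m
      = ∑ d ∈ range (i - 1), rieszStencil (3 - α) (d + 1) := by
    rw [sum_congr rfl fun m hm ↦ gCoef_of_lt (by simp only [mem_Ico] at hm; omega)
      (by simp only [mem_Ico] at hm; omega) hiN, sum_Ico_reflect _ _ (by omega),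
      sum_Ico_eq_sum_range, show i + 1 - 1 - (i + 1 - i) = i - 1 by omega]
    simp only [show i + 1 - i = 1 by omega, add_comm 1]
  have hright : ∑ m ∈ Ico (i + 1) N, gCoef α N i m
      = ∑ d ∈ range (N - (i + 1)), rieszStencil (3 - α) (d + 1) := by
    rw [sum_congr rfl fun m hm ↦ gCoef_of_gt hi (by simp only [mem_Ico] at hm; omega)
      (by simp only [mem_Ico] at hm; omega), sum_Ico_eq_sum_range]
    exact sum_congr rfl fun d _ ↦ by rw [show i + 1 + d - i = d + 1 by omega]
  have hhalf := sum_range_rieszStencil_le (β := 3 - α) (by linarith) (by linarith)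
  rw [hsplit, sum_union hdisj, hleft, hright, gCoef_self hi hiN]
  linarith [hhalf (i - 1), hhalf (N - (i + 1))]

lemma abs_le_of_row_dominant {ι : Type*} (s : Finset ι) {g v : ι → ℝ} {w d x r : ℝ}
    (hw : 0 ≤ w) (hg : ∀ m ∈ s, 0 ≤ g m) (hgd : ∑ m ∈ s, g m ≤ d)
    (hv : ∀ m ∈ s, |v m| ≤ |x|) (h : (1 + w * d) * x - w * ∑ m ∈ s, g m * v m = r) :
    |x| ≤ |r| := by
  have hd : 0 ≤ d := (sum_nonneg hg).trans hgd
  have hsum : |∑ m ∈ s, g m * v m| ≤ d * |x| :=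
    calc |∑ m ∈ s, g m * v m| ≤ ∑ m ∈ s, g m * |x| :=
          (abs_sum_le_sum_abs _ _).trans <| sum_le_sum fun m hm ↦ by
            rw [abs_mul, abs_of_nonneg (hg m hm)]
            exact mul_le_mul_of_nonneg_left (hv m hm) (hg m hm)
      _ ≤ d * |x| := by
          rw [← sum_mul]
          exact mul_le_mul_of_nonneg_right hgd (abs_nonneg x)
  have : (1 + w * d) * |x| ≤ |r| + w * (d * |x|) :=
    calc (1 + w * d) * |x| = |r + w * ∑ m ∈ s, g m * v m| := by
          rw [← h, sub_add_cancel, abs_mul,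
            abs_of_nonneg (add_nonneg zero_le_one (mul_nonneg hw hd))]
      _ ≤ |r| + w * (d * |x|) := by
          refine (abs_add_le _ _).trans (add_le_add_right ?_ _)
          rw [abs_mul, abs_of_nonneg hw]
          exact mul_le_mul_of_nonneg_left hsum hw
  linarith

lemma abs_le_maxAbs {N i : ℕ} (v : ℕ → ℝ) (hi : i ≤ N) : |v i| ≤ maxAbs N v :=
  le_sup' (fun i ↦ |v i|) (mem_range.2 (Nat.lt_succ_of_le hi))

lemma maxAbs_nonneg (N : ℕ) (v : ℕ → ℝ) : 0 ≤ maxAbs N v :=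
  (abs_nonneg _).trans (abs_le_maxAbs v (Nat.zero_le N))

lemma maxAbs_le_of_interior {N : ℕ} {v : ℕ → ℝ} {M : ℝ} (hM : 0 ≤ M) (hv₀ : v 0 = 0)
    (hvN : v N = 0) (h : ∀ i, 0 < i → i < N → |v i| = maxAbs N v → |v i| ≤ M) :
    maxAbs N v ≤ M := by
  obtain ⟨i, hi, hmax⟩ := exists_mem_eq_sup' nonempty_range_add_one fun i ↦ |v i|
  change maxAbs N v = |v i| at hmax
  rw [mem_range] at hi
  rw [hmax]
  rcases Nat.eq_zero_or_pos i with rfl | hi₀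
  · simpa [hv₀] using hM
  rcases eq_or_lt_of_le (Nat.le_of_lt_succ hi) with rfl | hiN
  · simpa [hvN] using hM
  exact h i hi₀ hiN hmax.symm

lemma abs_le_of_gCoef_row {α : ℝ} (hα₁ : 1 ≤ α) (hα₂ : α ≤ 2) {N i : ℕ} (hi : 0 < i)
    (hiN : i < N) {w r : ℝ} (hw : 0 ≤ w) {v : ℕ → ℝ} (hv₀ : v 0 = 0) (hvN : v N = 0)
    (hmax : |v i| = maxAbs N v)
    (h : (1 - w * gCoef α N i i) * v i
      - w * ∑ m ∈ (range (N + 1)).erase i, gCoef α N i m * v m = r) :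
    |v i| ≤ |r| := by
  have hinterior : ∑ m ∈ (Ioo 0 N).erase i, gCoef α N i m * v m
      = ∑ m ∈ (range (N + 1)).erase i, gCoef α N i m * v m := by
    refine sum_subset (fun m ↦ by simp only [mem_erase, mem_Ioo, mem_range]; omega) ?_
    intro m hm hm'
    simp only [mem_erase, mem_Ioo, mem_range] at hm hm'
    rcases (by omega : m = 0 ∨ m = N) with rfl | rfl <;> simp [hv₀, hvN]
  refine abs_le_of_row_dominant ((Ioo 0 N).erase i) (v := v) hw (fun m hm ↦ ?_)
    (sum_gCoef_interior_le hα₁ hα₂ hi hiN)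
    (fun m hm ↦ (abs_le_maxAbs (i := m) v ?_).trans hmax.ge) ?_
  · simp only [mem_erase, mem_Ioo] at hm
    rcases lt_or_gt_of_ne hm.1 with hmi | him
    · rw [gCoef_of_lt hm.2.1 hmi hiN]
      exact rieszStencil_nonneg (by linarith) (by linarith) (by omega)
    · rw [gCoef_of_gt hi him hm.2.2]
      exact rieszStencil_nonneg (by linarith) (by linarith) (by omega)
  · simp only [mem_erase, mem_Ioo] at hm
    omega
  · rw [hinterior, ← h]
    ring

lemma lCoef_zero {γ : ℝ} (hγ : γ ≠ 1) : lCoef γ 0 = 1 := by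
  simp [lCoef, zero_rpow (sub_ne_zero.2 hγ.symm)]

lemma lCoef_nonneg {γ : ℝ} (hγ : γ ≤ 1) (s : ℕ) : 0 ≤ lCoef γ s :=
  sub_nonneg.2 (rpow_le_rpow s.cast_nonneg (by linarith) (by linarith))

lemma lCoef_antitone {γ : ℝ} (hγ₀ : 0 ≤ γ) (hγ₁ : γ ≤ 1) : Antitone (lCoef γ) := by
  refine antitone_nat_of_succ_le fun s ↦ ?_
  have := rpowSecondDiff_nonpos (p := 1 - γ) (x := s + 1) (by linarith) (by linarith)
    (by linarith [s.cast_nonneg (α := ℝ)])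
  simp only [lCoef, rpowSecondDiff] at this ⊢
  push_cast
  ring_nf at this ⊢
  linarith

lemma abs_history_le {l v : ℕ → ℝ} {M : ℝ} {k : ℕ} (hl : Antitone l) (hl₀ : l 0 = 1)
    (hlk : 0 ≤ l k) (hv : ∀ j ≤ k, |v j| ≤ M) :
    |(∑ s ∈ range k, (l s - l (s + 1)) * v (k - s)) + l k * v 0| ≤ M := by
  have hweight : ∀ s, 0 ≤ l s - l (s + 1) := fun s ↦ sub_nonneg.2 (hl s.le_succ)
  calc _ ≤ (∑ s ∈ range k, (l s - l (s + 1)) * M) + l k * M := by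
        refine (abs_add_le _ _).trans (add_le_add
          ((abs_sum_le_sum_abs _ _).trans (sum_le_sum fun s _ ↦ ?_)) ?_)
        · rw [abs_mul, abs_of_nonneg (hweight s)]
          exact mul_le_mul_of_nonneg_left (hv _ (Nat.sub_le k s)) (hweight s)
        · rw [abs_mul, abs_of_nonneg hlk]
          exact mul_le_mul_of_nonneg_left (hv 0 (Nat.zero_le k)) hlk
    _ = M := by rw [← sum_mul, sum_range_sub', hl₀]; ring

lemma kappa_neg {α : ℝ} (h₁ : 1 < α) (h₂ : α < 3) : kappa α < 0 := by
  have : cos (α * π / 2) < 0 :=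
    cos_neg_of_pi_div_two_lt_of_lt (by nlinarith [pi_pos]) (by nlinarith [pi_pos])
  rw [kappa]
  exact div_neg_of_pos_of_neg one_pos (by linarith)

theorem implicit_1d_stable_general (γ α : ℝ) (hγ : γ ∈ Set.Ioo (0:ℝ) 1) (hα : α ∈ Set.Ioc (1:ℝ) 2)
    (N Nt : ℕ)
    (τ Δx : ℝ) (hτ : 0 < τ) (hΔx : 0 < Δx)
    (c : ℕ → ℕ → ℝ)
    (hc : ∀ i k : ℕ, 1 ≤ i → i ≤ N - 1 → 1 ≤ k → k ≤ Nt → 0 ≤ c i k)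
    (ω : ℕ → ℕ → ℝ)
    (hω : ∀ i k : ℕ, 1 ≤ i → i ≤ N - 1 → 1 ≤ k → k ≤ Nt →
      ω i k = -(Real.Gamma (2 - γ) * τ ^ γ * kappa α * c i k) / (Real.Gamma (4 - α) * Δx ^ α))
    (ε : ℕ → ℕ → ℝ)
    (hbc : ∀ k : ℕ, 1 ≤ k → k ≤ Nt → ε k 0 = 0 ∧ ε k N = 0)
    (hscheme : ∀ i k : ℕ, 1 ≤ i → i ≤ N - 1 → k + 1 ≤ Nt →
      (1 - ω i (k + 1) * gCoef α N i i) * ε (k + 1) i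
        - ω i (k + 1) * ∑ m ∈ (Finset.range (N + 1)).erase i, gCoef α N i m * ε (k + 1) m
      = (∑ s ∈ Finset.range k, (lCoef γ s - lCoef γ (s + 1)) * ε (k - s) i)
        + lCoef γ k * ε 0 i) :
    ∀ k : ℕ, k ≤ Nt → maxAbs N (ε k) ≤ maxAbs N (ε 0) := by
  obtain ⟨hγ₀, hγ₁⟩ := hγ
  obtain ⟨hα₁, hα₂⟩ := hα
  have hω_nonneg : ∀ i k, 1 ≤ i → i ≤ N - 1 → 1 ≤ k → k ≤ Nt → 0 ≤ ω i k := by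
    intro i k hi hiN hk hkNt
    have hκ := kappa_neg hα₁ (by linarith)
    have hΓ₂ := Gamma_pos_of_pos (by linarith : 0 < 2 - γ)
    have hΓ₄ := Gamma_pos_of_pos (by linarith : 0 < 4 - α)
    have hτγ := rpow_pos_of_pos hτ γ
    have hΔxα := rpow_pos_of_pos hΔx α
    rw [hω i k hi hiN hk hkNt, neg_div, neg_nonneg]
    exact div_nonpos_of_nonpos_of_nonneg (mul_nonpos_of_nonpos_of_nonneg
      (mul_nonpos_of_nonneg_of_nonpos (by positivity) hκ.le) (hc i k hi hiN hk hkNt))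
      (by positivity)
  intro k
  induction k using Nat.strong_induction_on with
  | _ k ih =>
  rcases k with _ | k
  · exact fun _ ↦ le_rfl
  intro hk
  obtain ⟨hε₀, hεN⟩ := hbc (k + 1) k.succ_pos hk
  refine maxAbs_le_of_interior (maxAbs_nonneg N (ε 0)) hε₀ hεN fun i hi hiN hmax ↦ ?_
  have hrow := abs_le_of_gCoef_row hα₁.le hα₂ hi hiN
    (hω_nonneg i (k + 1) hi (by omega) (by omega) hk) hε₀ hεN hmax (hscheme i k hi (by omega) hk)
  exact hrow.trans (abs_history_le (lCoef_antitone hγ₀.le hγ₁.le) (lCoef_zero hγ₁.ne)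
    (lCoef_nonneg hγ₁.le k) fun j hj ↦
      (abs_le_maxAbs (ε j) hiN.le).trans (ih j (by omega) (by omega)))

/-- Theorem 3.3 (case `0 < γ < 1`): unconditional stability of the one-dimensional
implicit finite difference scheme. -/
theorem implicit_1d_stable (γ α : ℝ) (hγ : γ ∈ Set.Ioo (0:ℝ) 1) (hα : α ∈ Set.Ioc (1:ℝ) 2)
    (N Nt : ℕ) (hN : 2 ≤ N) (hNt : 1 ≤ Nt)
    (τ Δx : ℝ) (hτ : 0 < τ) (hΔx : 0 < Δx)
    (c : ℕ → ℕ → ℝ)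
    (hc : ∀ i k : ℕ, 1 ≤ i → i ≤ N - 1 → 1 ≤ k → k ≤ Nt → 0 ≤ c i k)
    (ω : ℕ → ℕ → ℝ)
    (hω : ∀ i k : ℕ, 1 ≤ i → i ≤ N - 1 → 1 ≤ k → k ≤ Nt →
      ω i k = -(Real.Gamma (2 - γ) * τ ^ γ * kappa α * c i k) / (Real.Gamma (4 - α) * Δx ^ α))
    (ε : ℕ → ℕ → ℝ)
    (hbc : ∀ k : ℕ, 1 ≤ k → k ≤ Nt → ε k 0 = 0 ∧ ε k N = 0)
    (hscheme : ∀ i k : ℕ, 1 ≤ i → i ≤ N - 1 → k + 1 ≤ Nt →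
      (1 - ω i (k + 1) * gCoef α N i i) * ε (k + 1) i
        - ω i (k + 1) * ∑ m ∈ (Finset.range (N + 1)).erase i, gCoef α N i m * ε (k + 1) m
      = (∑ s ∈ Finset.range k, (lCoef γ s - lCoef γ (s + 1)) * ε (k - s) i)
        + lCoef γ k * ε 0 i) :
    ∀ k : ℕ, k ≤ Nt → maxAbs N (ε k) ≤ maxAbs N (ε 0) :=
  implicit_1d_stable_general γ α hγ hα N Nt τ Δx hτ hΔx c hc ω hω ε hbc hscheme
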